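/- arXiv:1811.09973 — 8 statements merged into one kernel-verified Lean document; each statement's English description precedes it below -/
import Mathlib

section
/- The function f(γ,β) := R_sum(γ,β) + (1/2)·log(Q / D(γ,β)) is non-increasing in each of its arguments separately on [0,1]×[0,1]; that is, for fixed β ∈ [0,1] the map γ ↦ f(γ,β) is antitone on [0,1], and for fixed γ ∈ [0,1] the map β ↦ f(γ,β) is antitone on [0,1]. (This is Lemma 3 of the paper.) -/
noncomputable def Lfun (P1 P2 Q σ2 γ β : ℝ) : ℝ :=
  P1 + P2 + Q + σ2 + 2 * Real.sqrt ((1 - γ) * P1 * Q) + 2 * Real.sqrt ((1 - β) * P2 * Q)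
    + 2 * Real.sqrt ((1 - γ) * (1 - β) * P1 * P2)

noncomputable def Dfun (P1 P2 Q σ2 γ β : ℝ) : ℝ :=
  Q * (σ2 + γ * P1 + β * P2) / Lfun P1 P2 Q σ2 γ β

noncomputable def Rsum (P1 P2 σ2 γ β : ℝ) : ℝ :=
  (1 / 2) * Real.log (1 + (γ * P1 + β * P2) / σ2)

lemma Lfun_pos (P1 P2 Q σ2 γ β : ℝ) (hP1 : 0 < P1) (hP2 : 0 < P2) (hQ : 0 < Q)
    (hσ : 0 < σ2) : 0 < Lfun P1 P2 Q σ2 γ β := by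
  unfold Lfun
  have h1 := Real.sqrt_nonneg ((1 - γ) * P1 * Q)
  have h2 := Real.sqrt_nonneg ((1 - β) * P2 * Q)
  have h3 := Real.sqrt_nonneg ((1 - γ) * (1 - β) * P1 * P2)
  linarith

lemma key_eq (P1 P2 Q σ2 γ β : ℝ) (hP1 : 0 < P1) (hP2 : 0 < P2) (hQ : 0 < Q)
    (hσ : 0 < σ2) (hγ : 0 ≤ γ) (hβ : 0 ≤ β) :
    Rsum P1 P2 σ2 γ β + (1 / 2) * Real.log (Q / Dfun P1 P2 Q σ2 γ β)
      = (1 / 2) * Real.log (Lfun P1 P2 Q σ2 γ β / σ2) := by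
  have hL := Lfun_pos P1 P2 Q σ2 γ β hP1 hP2 hQ hσ
  have hS : 0 < σ2 + γ * P1 + β * P2 := by nlinarith
  have h1 : Q / Dfun P1 P2 Q σ2 γ β = Lfun P1 P2 Q σ2 γ β / (σ2 + γ * P1 + β * P2) := by
    unfold Dfun
    field_simp
  have h2 : 1 + (γ * P1 + β * P2) / σ2 = (σ2 + γ * P1 + β * P2) / σ2 := by
    field_simp
    ring
  rw [Rsum, h1, h2, Real.log_div (by positivity) (ne_of_gt hσ),
    Real.log_div (ne_of_gt hL) (ne_of_gt hS), Real.log_div (ne_of_gt hL) (ne_of_gt hσ)]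
  ring

theorem stmt_0 (P1 P2 Q σ2 : ℝ) (hP1 : 0 < P1) (hP2 : 0 < P2) (hQ : 0 < Q) (hσ : 0 < σ2) :
    (∀ β ∈ Set.Icc (0:ℝ) 1,
      AntitoneOn (fun γ => Rsum P1 P2 σ2 γ β
        + (1 / 2) * Real.log (Q / Dfun P1 P2 Q σ2 γ β)) (Set.Icc 0 1)) ∧
    (∀ γ ∈ Set.Icc (0:ℝ) 1,
      AntitoneOn (fun β => Rsum P1 P2 σ2 γ β
        + (1 / 2) * Real.log (Q / Dfun P1 P2 Q σ2 γ β)) (Set.Icc 0 1)) := by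
  constructor
  · intro β hβ a ha b hb hab
    obtain ⟨hβ0, hβ1⟩ := hβ
    obtain ⟨ha0, ha1⟩ := ha
    obtain ⟨hb0, hb1⟩ := hb
    simp only
    rw [key_eq P1 P2 Q σ2 a β hP1 hP2 hQ hσ ha0 hβ0,
        key_eq P1 P2 Q σ2 b β hP1 hP2 hQ hσ hb0 hβ0]
    have hLb := Lfun_pos P1 P2 Q σ2 b β hP1 hP2 hQ hσ
    have hLL : Lfun P1 P2 Q σ2 b β ≤ Lfun P1 P2 Q σ2 a β := by
      unfold Lfun
      gcongr <;> nlinarith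
    have : (0:ℝ) < Lfun P1 P2 Q σ2 b β / σ2 := by positivity
    gcongr
  · intro γ hγ a ha b hb hab
    obtain ⟨hγ0, hγ1⟩ := hγ
    obtain ⟨ha0, ha1⟩ := ha
    obtain ⟨hb0, hb1⟩ := hb
    simp only
    rw [key_eq P1 P2 Q σ2 γ a hP1 hP2 hQ hσ hγ0 ha0,
        key_eq P1 P2 Q σ2 γ b hP1 hP2 hQ hσ hγ0 hb0]
    have hLb := Lfun_pos P1 P2 Q σ2 γ b hP1 hP2 hQ hσ
    have hLL : Lfun P1 P2 Q σ2 γ b ≤ Lfun P1 P2 Q σ2 γ a := by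
      unfold Lfun
      gcongr <;> nlinarith
    have : (0:ℝ) < Lfun P1 P2 Q σ2 γ b / σ2 := by positivity
    gcongr
end

section
/- For every λ with 0 < λ < 1 and every μ ≥ 1, the function f(γ,β) := ((μ−1)/2)·log(1 + γ·P1/σ²) + R_sum(γ,β) + (λ/2)·log(Q / D(γ,β)) is jointly strictly concave on the square [0,1]×[0,1]. (This is Lemma 5 of the paper.) -/
/-- concavity of sqrt at a convex combination -/
lemma sqrt_comb {a b s t : ℝ} (ha : 0 ≤ a) (hb : 0 ≤ b) (hs : 0 < s) (ht : 0 < t)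
    (hst : s + t = 1) : s * Real.sqrt a + t * Real.sqrt b ≤ Real.sqrt (s * a + t * b) := by
  have h1 : Real.sqrt a ^ 2 = a := Real.sq_sqrt ha
  have h2 : Real.sqrt b ^ 2 = b := Real.sq_sqrt hb
  have h3 := Real.sqrt_nonneg a
  have h4 := Real.sqrt_nonneg b
  rw [Real.le_sqrt (by positivity) (by positivity)]
  have goal2 : (s * Real.sqrt a + t * Real.sqrt b) ^ 2
      ≤ s * Real.sqrt a ^ 2 + t * Real.sqrt b ^ 2 := by
    nlinarith [mul_nonneg (mul_pos hs ht).le (sq_nonneg (Real.sqrt a - Real.sqrt b))]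
  rwa [h1, h2] at goal2

/-- strict concavity of sqrt at a convex combination -/
lemma sqrt_comb_strict {a b s t : ℝ} (ha : 0 ≤ a) (hb : 0 ≤ b) (hab : a ≠ b)
    (hs : 0 < s) (ht : 0 < t) (hst : s + t = 1) :
    s * Real.sqrt a + t * Real.sqrt b < Real.sqrt (s * a + t * b) := by
  have h1 : Real.sqrt a ^ 2 = a := Real.sq_sqrt ha
  have h2 : Real.sqrt b ^ 2 = b := Real.sq_sqrt hb
  have h3 := Real.sqrt_nonneg a
  have h4 := Real.sqrt_nonneg b
  have hne : Real.sqrt a ≠ Real.sqrt b := by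
    intro h; exact hab (by rw [← h1, ← h2, h])
  have h5 : 0 < (Real.sqrt a - Real.sqrt b) ^ 2 :=
    lt_of_le_of_ne (sq_nonneg _) (Ne.symm (pow_ne_zero 2 (sub_ne_zero.mpr hne)))
  rw [Real.lt_sqrt (by positivity)]
  have goal2 : (s * Real.sqrt a + t * Real.sqrt b) ^ 2
      < s * Real.sqrt a ^ 2 + t * Real.sqrt b ^ 2 := by
    nlinarith [mul_pos (mul_pos hs ht) h5]
  rwa [h1, h2] at goal2

/-- geometric-mean concavity at a convex combination -/
lemma gm_comb {a b c d s t : ℝ} (ha : 0 ≤ a) (hb : 0 ≤ b) (hc : 0 ≤ c) (hd : 0 ≤ d)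
    (hs : 0 < s) (ht : 0 < t) (hst : s + t = 1) :
    s * Real.sqrt (a * b) + t * Real.sqrt (c * d)
      ≤ Real.sqrt ((s * a + t * c) * (s * b + t * d)) := by
  have h1 : Real.sqrt (a * b) ^ 2 = a * b := Real.sq_sqrt (by positivity)
  have h2 : Real.sqrt (c * d) ^ 2 = c * d := Real.sq_sqrt (by positivity)
  have h3 := Real.sqrt_nonneg (a * b)
  have h4 := Real.sqrt_nonneg (c * d)
  have key : Real.sqrt (a * b) * Real.sqrt (c * d) = Real.sqrt (a * d) * Real.sqrt (c * b) := by
    rw [← Real.sqrt_mul (by positivity), ← Real.sqrt_mul (by positivity)]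
    ring_nf
  have h5 : Real.sqrt (a * d) ^ 2 = a * d := Real.sq_sqrt (by positivity)
  have h6 : Real.sqrt (c * b) ^ 2 = c * b := Real.sq_sqrt (by positivity)
  have hmain : 2 * (Real.sqrt (a * b) * Real.sqrt (c * d)) ≤ a * d + c * b := by
    rw [key]
    nlinarith [sq_nonneg (Real.sqrt (a * d) - Real.sqrt (c * b))]
  rw [Real.le_sqrt (by positivity) (by positivity)]
  have goal2 : (s * Real.sqrt (a * b) + t * Real.sqrt (c * d)) ^ 2
      ≤ s ^ 2 * Real.sqrt (a * b) ^ 2 + s * t * (a * d + c * b)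
        + t ^ 2 * Real.sqrt (c * d) ^ 2 := by
    nlinarith [mul_le_mul_of_nonneg_left hmain (mul_pos hs ht).le]
  rw [h1, h2] at goal2
  calc (s * Real.sqrt (a * b) + t * Real.sqrt (c * d)) ^ 2
      ≤ s ^ 2 * (a * b) + s * t * (a * d + c * b) + t ^ 2 * (c * d) := goal2
    _ = (s * a + t * c) * (s * b + t * d) := by ring

/-- concavity of log at a convex combination -/
lemma log_comb {u v s t : ℝ} (hu : 0 < u) (hv : 0 < v) (hs : 0 ≤ s) (ht : 0 ≤ t)
    (hst : s + t = 1) : s * Real.log u + t * Real.log v ≤ Real.log (s * u + t * v) := by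
  have := strictConcaveOn_log_Ioi.concaveOn.2 (Set.mem_Ioi.mpr hu) (Set.mem_Ioi.mpr hv) hs ht hst
  simpa using this

lemma log_comb_strict {u v s t : ℝ} (hu : 0 < u) (hv : 0 < v) (huv : u ≠ v)
    (hs : 0 < s) (ht : 0 < t) (hst : s + t = 1) :
    s * Real.log u + t * Real.log v < Real.log (s * u + t * v) := by
  have := strictConcaveOn_log_Ioi.2 (Set.mem_Ioi.mpr hu) (Set.mem_Ioi.mpr hv) huv hs ht hst
  simpa using this

set_option maxHeartbeats 1000000 in
theorem stmt_3 (P1 P2 Q σ2 : ℝ) (hP1 : 0 < P1) (hP2 : 0 < P2) (hQ : 0 < Q) (hσ : 0 < σ2)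
    (lam μ : ℝ) (hlam : 0 < lam) (hlam1 : lam < 1) (hμ : 1 ≤ μ) :
    StrictConcaveOn ℝ (Set.Icc (0:ℝ) 1 ×ˢ Set.Icc (0:ℝ) 1)
      (fun p : ℝ × ℝ => ((μ - 1) / 2) * Real.log (1 + p.1 * P1 / σ2)
        + Rsum P1 P2 σ2 p.1 p.2
        + (lam / 2) * Real.log (Q / Dfun P1 P2 Q σ2 p.1 p.2)) := by
  -- positivity of L on the square
  have hLpos : ∀ γ β : ℝ, γ ∈ Set.Icc (0:ℝ) 1 → β ∈ Set.Icc (0:ℝ) 1 →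
      0 < Lfun P1 P2 Q σ2 γ β := by
    intro γ β hγ hβ
    have := Real.sqrt_nonneg ((1 - γ) * P1 * Q)
    have := Real.sqrt_nonneg ((1 - β) * P2 * Q)
    have := Real.sqrt_nonneg ((1 - γ) * (1 - β) * P1 * P2)
    unfold Lfun; linarith
  -- value rewriting on the square
  have hval : ∀ p : ℝ × ℝ, p ∈ Set.Icc (0:ℝ) 1 ×ˢ Set.Icc (0:ℝ) 1 →
      ((μ - 1) / 2) * Real.log (1 + p.1 * P1 / σ2)
        + Rsum P1 P2 σ2 p.1 p.2
        + (lam / 2) * Real.log (Q / Dfun P1 P2 Q σ2 p.1 p.2)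
      = ((μ - 1) / 2) * Real.log (σ2 + p.1 * P1)
        + ((1 - lam) / 2) * Real.log (σ2 + p.1 * P1 + p.2 * P2)
        + (lam / 2) * Real.log (Lfun P1 P2 Q σ2 p.1 p.2)
        - (μ / 2) * Real.log σ2 := by
    intro p hp
    obtain ⟨hp1, hp2⟩ := hp
    have h1 : 0 < σ2 + p.1 * P1 := by nlinarith [hp1.1]
    have h2 : 0 < σ2 + p.1 * P1 + p.2 * P2 := by nlinarith [hp1.1, hp2.1]
    have hL := hLpos p.1 p.2 hp1 hp2
    have e1 : 1 + p.1 * P1 / σ2 = (σ2 + p.1 * P1) / σ2 := by field_simp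
    have e2 : 1 + (p.1 * P1 + p.2 * P2) / σ2 = (σ2 + p.1 * P1 + p.2 * P2) / σ2 := by
      field_simp; ring
    have e3 : Q / Dfun P1 P2 Q σ2 p.1 p.2
        = Lfun P1 P2 Q σ2 p.1 p.2 / (σ2 + p.1 * P1 + p.2 * P2) := by
      unfold Dfun
      rw [div_div_eq_mul_div, div_eq_div_iff (by positivity) (by positivity)]
      ring
    rw [Rsum, e1, e2, e3, Real.log_div h1.ne' hσ.ne', Real.log_div h2.ne' hσ.ne',
      Real.log_div hL.ne' h2.ne']
    ring
  constructor
  · exact (convex_Icc 0 1).prod (convex_Icc 0 1)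
  intro x hx y hy hxy s t hs ht hst
  have hz : s • x + t • y ∈ Set.Icc (0:ℝ) 1 ×ˢ Set.Icc (0:ℝ) 1 :=
    ((convex_Icc (0:ℝ) 1).prod (convex_Icc 0 1)) hx hy hs.le ht.le hst
  simp only [smul_eq_mul]
  rw [hval x hx, hval y hy, hval _ hz]
  obtain ⟨hx1, hx2⟩ := hx
  obtain ⟨hy1, hy2⟩ := hy
  simp only [Set.mem_Icc] at hx1 hx2 hy1 hy2
  have hz1 : (s • x + t • y).1 = s * x.1 + t * y.1 := rfl
  have hz2 : (s • x + t • y).2 = s * x.2 + t * y.2 := rfl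
  rw [hz1, hz2]
  obtain rfl : t = 1 - s := by linarith
  set t : ℝ := 1 - s with htdef
  have ht' : 0 < t := ht
  -- positivity facts
  have hux : 0 < σ2 + x.1 * P1 := by nlinarith [hx1.1]
  have huy : 0 < σ2 + y.1 * P1 := by nlinarith [hy1.1]
  have hvx : 0 < σ2 + x.1 * P1 + x.2 * P2 := by nlinarith [hx1.1, hx2.1]
  have hvy : 0 < σ2 + y.1 * P1 + y.2 * P2 := by nlinarith [hy1.1, hy2.1]
  have hLx := hLpos x.1 x.2 (Set.mem_Icc.mpr hx1) (Set.mem_Icc.mpr hx2)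
  have hLy := hLpos y.1 y.2 (Set.mem_Icc.mpr hy1) (Set.mem_Icc.mpr hy2)
  have hst' : s + t = 1 := by rw [htdef]; ring
  -- first log term : concave (coefficient (μ-1)/2 ≥ 0)
  have hA : (0:ℝ) ≤ (μ - 1) / 2 := by linarith
  have ea : σ2 + (s * x.1 + t * y.1) * P1 = s * (σ2 + x.1 * P1) + t * (σ2 + y.1 * P1) := by
    rw [htdef]; ring
  have t1 : s * Real.log (σ2 + x.1 * P1) + t * Real.log (σ2 + y.1 * P1)
      ≤ Real.log (σ2 + (s * x.1 + t * y.1) * P1) := by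
    rw [ea]; exact log_comb hux huy hs.le ht'.le hst'
  -- L concavity
  have hax : (0:ℝ) ≤ 1 - x.1 := by linarith [hx1.2]
  have hay : (0:ℝ) ≤ 1 - y.1 := by linarith [hy1.2]
  have hbx : (0:ℝ) ≤ 1 - x.2 := by linarith [hx2.2]
  have hby : (0:ℝ) ≤ 1 - y.2 := by linarith [hy2.2]
  have tB : s * Real.sqrt ((1 - x.2) * P2 * Q) + t * Real.sqrt ((1 - y.2) * P2 * Q)
      ≤ Real.sqrt ((1 - (s * x.2 + t * y.2)) * P2 * Q) := by
    have h := sqrt_comb (a := (1 - x.2) * P2 * Q) (b := (1 - y.2) * P2 * Q)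
      (by positivity) (by positivity) hs ht' hst'
    have e : s * ((1 - x.2) * P2 * Q) + t * ((1 - y.2) * P2 * Q)
        = (1 - (s * x.2 + t * y.2)) * P2 * Q := by rw [htdef]; ring
    rwa [e] at h
  have tC : s * Real.sqrt ((1 - x.1) * (1 - x.2) * P1 * P2)
        + t * Real.sqrt ((1 - y.1) * (1 - y.2) * P1 * P2)
      ≤ Real.sqrt ((1 - (s * x.1 + t * y.1)) * (1 - (s * x.2 + t * y.2)) * P1 * P2) := by
    have h := gm_comb (a := (1 - x.1) * P1) (b := (1 - x.2) * P2)
      (c := (1 - y.1) * P1) (d := (1 - y.2) * P2)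
      (by positivity) (by positivity) (by positivity) (by positivity) hs ht' hst'
    have e1 : (1 - x.1) * P1 * ((1 - x.2) * P2) = (1 - x.1) * (1 - x.2) * P1 * P2 := by ring
    have e2 : (1 - y.1) * P1 * ((1 - y.2) * P2) = (1 - y.1) * (1 - y.2) * P1 * P2 := by ring
    have e3 : (s * ((1 - x.1) * P1) + t * ((1 - y.1) * P1))
        * (s * ((1 - x.2) * P2) + t * ((1 - y.2) * P2))
        = (1 - (s * x.1 + t * y.1)) * (1 - (s * x.2 + t * y.2)) * P1 * P2 := by
      rw [htdef]; ring
    rwa [e1, e2, e3] at h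
  have eA : s * ((1 - x.1) * P1 * Q) + t * ((1 - y.1) * P1 * Q)
      = (1 - (s * x.1 + t * y.1)) * P1 * Q := by rw [htdef]; ring
  have tA : s * Real.sqrt ((1 - x.1) * P1 * Q) + t * Real.sqrt ((1 - y.1) * P1 * Q)
      ≤ Real.sqrt ((1 - (s * x.1 + t * y.1)) * P1 * Q) := by
    have h := sqrt_comb (a := (1 - x.1) * P1 * Q) (b := (1 - y.1) * P1 * Q)
      (by positivity) (by positivity) hs ht' hst'
    rwa [eA] at h
  have hLcomb : s * Lfun P1 P2 Q σ2 x.1 x.2 + t * Lfun P1 P2 Q σ2 y.1 y.2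
      ≤ Lfun P1 P2 Q σ2 (s * x.1 + t * y.1) (s * x.2 + t * y.2) := by
    unfold Lfun
    have hc : s * (P1 + P2 + Q + σ2) + t * (P1 + P2 + Q + σ2) = P1 + P2 + Q + σ2 := by
      rw [htdef]; ring
    linarith [tA, tB, tC, hc]
  have hlogL : s * Real.log (Lfun P1 P2 Q σ2 x.1 x.2) + t * Real.log (Lfun P1 P2 Q σ2 y.1 y.2)
      ≤ Real.log (Lfun P1 P2 Q σ2 (s * x.1 + t * y.1) (s * x.2 + t * y.2)) := by
    calc s * Real.log (Lfun P1 P2 Q σ2 x.1 x.2) + t * Real.log (Lfun P1 P2 Q σ2 y.1 y.2)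
        ≤ Real.log (s * Lfun P1 P2 Q σ2 x.1 x.2 + t * Lfun P1 P2 Q σ2 y.1 y.2) :=
          log_comb hLx hLy hs.le ht'.le hst'
      _ ≤ _ := Real.log_le_log (by positivity) hLcomb
  have ev : σ2 + (s * x.1 + t * y.1) * P1 + (s * x.2 + t * y.2) * P2
      = s * (σ2 + x.1 * P1 + x.2 * P2) + t * (σ2 + y.1 * P1 + y.2 * P2) := by
    rw [htdef]; ring
  have halam : (0:ℝ) < (1 - lam) / 2 := by linarith
  have hblam : (0:ℝ) < lam / 2 := by linarith
  by_cases hcase : σ2 + x.1 * P1 + x.2 * P2 = σ2 + y.1 * P1 + y.2 * P2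
  · -- middle term is equality; strictness from L via x.1 ≠ y.1
    have hg : x.1 ≠ y.1 := by
      intro h
      apply hxy
      have h2' : x.2 = y.2 := by
        have : x.2 * P2 = y.2 * P2 := by rw [h] at hcase; linarith
        exact mul_right_cancel₀ (ne_of_gt hP2) this
      exact Prod.ext h h2'
    have tA' : s * Real.sqrt ((1 - x.1) * P1 * Q) + t * Real.sqrt ((1 - y.1) * P1 * Q)
        < Real.sqrt ((1 - (s * x.1 + t * y.1)) * P1 * Q) := by
      have hne : (1 - x.1) * P1 * Q ≠ (1 - y.1) * P1 * Q := by
        intro h; apply hg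
        have h' := mul_right_cancel₀ (ne_of_gt hQ) h
        have h'' := mul_right_cancel₀ (ne_of_gt hP1) h'
        linarith
      have h := sqrt_comb_strict (a := (1 - x.1) * P1 * Q) (b := (1 - y.1) * P1 * Q)
        (by positivity) (by positivity) hne hs ht' hst'
      rwa [eA] at h
    have hLstrict : s * Lfun P1 P2 Q σ2 x.1 x.2 + t * Lfun P1 P2 Q σ2 y.1 y.2
        < Lfun P1 P2 Q σ2 (s * x.1 + t * y.1) (s * x.2 + t * y.2) := by
      unfold Lfun
      have hc : s * (P1 + P2 + Q + σ2) + t * (P1 + P2 + Q + σ2) = P1 + P2 + Q + σ2 := by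
        rw [htdef]; ring
      linarith [tA', tB, tC, hc]
    have hlogLs : s * Real.log (Lfun P1 P2 Q σ2 x.1 x.2) + t * Real.log (Lfun P1 P2 Q σ2 y.1 y.2)
        < Real.log (Lfun P1 P2 Q σ2 (s * x.1 + t * y.1) (s * x.2 + t * y.2)) := by
      calc s * Real.log (Lfun P1 P2 Q σ2 x.1 x.2) + t * Real.log (Lfun P1 P2 Q σ2 y.1 y.2)
          ≤ Real.log (s * Lfun P1 P2 Q σ2 x.1 x.2 + t * Lfun P1 P2 Q σ2 y.1 y.2) :=
            log_comb hLx hLy hs.le ht'.le hst'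
        _ < _ := Real.log_lt_log (by positivity) hLstrict
    have t2 : s * Real.log (σ2 + x.1 * P1 + x.2 * P2) + t * Real.log (σ2 + y.1 * P1 + y.2 * P2)
        ≤ Real.log (σ2 + (s * x.1 + t * y.1) * P1 + (s * x.2 + t * y.2) * P2) := by
      rw [ev]; exact log_comb hvx hvy hs.le ht'.le hst'
    have c1 := mul_le_mul_of_nonneg_left t1 hA
    have c2 := mul_le_mul_of_nonneg_left t2 halam.le
    have c3 := mul_lt_mul_of_pos_left hlogLs hblam
    have hc4 : s * ((μ / 2) * Real.log σ2) + t * ((μ / 2) * Real.log σ2)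
        = (μ / 2) * Real.log σ2 := by rw [htdef]; ring
    linarith [c1, c2, c3, hc4]
  · -- strictness from middle term
    have t2 : s * Real.log (σ2 + x.1 * P1 + x.2 * P2) + t * Real.log (σ2 + y.1 * P1 + y.2 * P2)
        < Real.log (σ2 + (s * x.1 + t * y.1) * P1 + (s * x.2 + t * y.2) * P2) := by
      rw [ev]; exact log_comb_strict hvx hvy hcase hs ht' hst'
    have c1 := mul_le_mul_of_nonneg_left t1 hA
    have c2 := mul_lt_mul_of_pos_left t2 halam
    have c3 := mul_le_mul_of_nonneg_left hlogL hblam.le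
    have hc4 : s * ((μ / 2) * Real.log σ2) + t * ((μ / 2) * Real.log σ2)
        = (μ / 2) * Real.log σ2 := by rw [htdef]; ring
    linarith [c1, c2, c3, hc4]
end

section
/- Let N ≥ 1, let c₀ ≥ 0 and let c : Fin N → ℝ be nonnegative. Then the function L(ν) := c₀ + Σ_{i} Σ_{j} c_i · c_j · √((1 − ν_i)·(1 − ν_j)) is concave on the cube [0,1]^N. -/
private lemma sqrt_key {u v p q a b : ℝ} (hu : 0 ≤ u) (hv : 0 ≤ v) (hp : 0 ≤ p)
    (hq : 0 ≤ q) (ha : 0 ≤ a) (hb : 0 ≤ b) :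
    a * Real.sqrt (u * v) + b * Real.sqrt (p * q)
      ≤ Real.sqrt ((a * u + b * p) * (a * v + b * q)) := by
  rw [Real.sqrt_mul hu, Real.sqrt_mul hp]
  rw [show a * u + b * p = a * Real.sqrt u ^ 2 + b * Real.sqrt p ^ 2 by
        rw [Real.sq_sqrt hu, Real.sq_sqrt hp],
      show a * v + b * q = a * Real.sqrt v ^ 2 + b * Real.sqrt q ^ 2 by
        rw [Real.sq_sqrt hv, Real.sq_sqrt hq]]
  set su := Real.sqrt u with hsu
  set sv := Real.sqrt v with hsv
  set sp := Real.sqrt p with hsp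
  set sq := Real.sqrt q with hsq
  have h1 : 0 ≤ su := Real.sqrt_nonneg _
  have h2 : 0 ≤ sv := Real.sqrt_nonneg _
  have h3 : 0 ≤ sp := Real.sqrt_nonneg _
  have h4 : 0 ≤ sq := Real.sqrt_nonneg _
  have hL : 0 ≤ a * (su * sv) + b * (sp * sq) := by positivity
  rw [show a * (su * sv) + b * (sp * sq) = Real.sqrt ((a * (su*sv) + b * (sp*sq))^2) from
    (Real.sqrt_sq hL).symm]
  apply Real.sqrt_le_sqrt
  nlinarith [sq_nonneg (su * sq - sv * sp), mul_nonneg ha hb]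

private lemma concaveOn_sum {ι E : Type*} [AddCommGroup E] [Module ℝ E] {s : Set E}
    (hs : Convex ℝ s) (t : Finset ι) (f : ι → E → ℝ)
    (h : ∀ i ∈ t, ConcaveOn ℝ s (f i)) :
    ConcaveOn ℝ s (fun x => ∑ i ∈ t, f i x) := by
  classical
  induction t using Finset.cons_induction with
  | empty => simpa using concaveOn_const (0:ℝ) hs
  | cons i t hi ih =>
    simp only [Finset.sum_cons]
    exact (h i (Finset.mem_cons_self _ _)).add
      (ih fun j hj => h j (Finset.mem_cons_of_mem hj))

theorem stmt_7 (N : ℕ) (hN : 1 ≤ N) (c₀ : ℝ) (hc₀ : 0 ≤ c₀)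
    (c : Fin N → ℝ) (hc : ∀ i, 0 ≤ c i) :
    ConcaveOn ℝ (Set.pi Set.univ fun _ => Set.Icc (0:ℝ) 1)
      (fun ν : Fin N → ℝ =>
        c₀ + ∑ i, ∑ j, c i * c j * Real.sqrt ((1 - ν i) * (1 - ν j))) := by
  have hs : Convex ℝ (Set.pi Set.univ fun _ : Fin N => Set.Icc (0:ℝ) 1) :=
    convex_pi fun _ _ => convex_Icc 0 1
  apply (concaveOn_const c₀ hs).add
  apply concaveOn_sum hs
  intro i _
  apply concaveOn_sum hs
  intro j _
  have hkey : ConcaveOn ℝ (Set.pi Set.univ fun _ : Fin N => Set.Icc (0:ℝ) 1)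
      (fun ν : Fin N → ℝ => Real.sqrt ((1 - ν i) * (1 - ν j))) := by
    refine ⟨hs, fun x hx y hy a b ha hb hab => ?_⟩
    have hxi := (hx i (Set.mem_univ i)).2
    have hxj := (hx j (Set.mem_univ j)).2
    have hyi := (hy i (Set.mem_univ i)).2
    have hyj := (hy j (Set.mem_univ j)).2
    simp only [Pi.add_apply, Pi.smul_apply, smul_eq_mul]
    have := sqrt_key (u := 1 - x i) (v := 1 - x j) (p := 1 - y i) (q := 1 - y j)
      (by linarith) (by linarith) (by linarith) (by linarith) ha hb
    calc a * Real.sqrt ((1 - x i) * (1 - x j)) + b * Real.sqrt ((1 - y i) * (1 - y j))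
        ≤ Real.sqrt ((a * (1 - x i) + b * (1 - y i)) * (a * (1 - x j) + b * (1 - y j))) := this
      _ = Real.sqrt ((1 - (a * x i + b * y i)) * (1 - (a * x j + b * y j))) := by
        congr 1
        linear_combination (a + b + 1 - (a * x i + b * y i) - (a * x j + b * y j)) * hab
  simpa [mul_comm, mul_assoc] using hkey.smul (mul_nonneg (hc i) (hc j))
end

section
/- For each index k ∈ Fin N and fixed values of the other coordinates, the map ν_k ↦ g(ν) := (1/2)·log((σ² + Σ_j ν_j·P_j + M(ν)²)/σ²) is non-increasing on [0,1], where M(ν) = α·√Q + Σ_j √((1−ν_j)·P_j); equivalently, the function f(ν) = R_sum(ν) + (1/2)·log(Q/D(ν)) of the paper is non-increasing in each argument. (This is Lemma 6 of the paper.) -/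
theorem stmt_9 (N : ℕ) (hN : 1 ≤ N) (Q σ2 α : ℝ) (hQ : 0 < Q) (hσ : 0 < σ2) (hα : 0 ≤ α)
    (P : Fin N → ℝ) (hP : ∀ i, 0 < P i) :
    ∀ k : Fin N, ∀ ν : Fin N → ℝ, (∀ j, ν j ∈ Set.Icc (0:ℝ) 1) →
      AntitoneOn (fun t =>
        (1 / 2) * Real.log ((σ2 + (∑ j, Function.update ν k t j * P j)
          + (α * Real.sqrt Q
              + ∑ j, Real.sqrt ((1 - Function.update ν k t j) * P j)) ^ 2) / σ2))
        (Set.Icc 0 1) := by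
  intro k ν hν s hs t ht hst
  have hPk := hP k
  set C : ℝ := ∑ j ∈ Finset.univ.erase k, ν j * P j with hC
  set E : ℝ := ∑ j ∈ Finset.univ.erase k, Real.sqrt ((1 - ν j) * P j) with hE
  have hCnn : 0 ≤ C := Finset.sum_nonneg fun j _ =>
    mul_nonneg (hν j).1 (hP j).le
  have hEnn : 0 ≤ E := Finset.sum_nonneg fun j _ => Real.sqrt_nonneg _
  set A : ℝ := α * Real.sqrt Q + E with hA
  have hAnn : 0 ≤ A := add_nonneg (mul_nonneg hα (Real.sqrt_nonneg _)) hEnn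
  have key : ∀ u ∈ Set.Icc (0:ℝ) 1,
      σ2 + (∑ j, Function.update ν k u j * P j)
        + (α * Real.sqrt Q + ∑ j, Real.sqrt ((1 - Function.update ν k u j) * P j)) ^ 2
      = σ2 + C + P k + A ^ 2 + 2 * A * Real.sqrt ((1 - u) * P k) := by
    intro u hu
    have h1 : (∑ j, Function.update ν k u j * P j) = u * P k + C := by
      rw [hC, ← Finset.add_sum_erase _ _ (Finset.mem_univ k)]
      congr 1
      · simp
      · exact Finset.sum_congr rfl fun j hj => by
          rw [Function.update_of_ne (Finset.ne_of_mem_erase hj)]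
    have h2 : (∑ j, Real.sqrt ((1 - Function.update ν k u j) * P j))
        = Real.sqrt ((1 - u) * P k) + E := by
      rw [hE, ← Finset.add_sum_erase _ _ (Finset.mem_univ k)]
      congr 1
      · simp
      · exact Finset.sum_congr rfl fun j hj => by
          rw [Function.update_of_ne (Finset.ne_of_mem_erase hj)]
    rw [h1, h2, hA]
    have hsq : Real.sqrt ((1 - u) * P k) ^ 2 = (1 - u) * P k :=
      Real.sq_sqrt (mul_nonneg (by linarith [hu.2]) hPk.le)
    linear_combination hsq
  simp only
  rw [key s hs, key t ht]
  have hr : Real.sqrt ((1 - t) * P k) ≤ Real.sqrt ((1 - s) * P k) := by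
    apply Real.sqrt_le_sqrt
    nlinarith
  have h0 : 0 ≤ 2 * A * Real.sqrt ((1 - t) * P k) :=
    mul_nonneg (by linarith) (Real.sqrt_nonneg _)
  have hpos : 0 < σ2 + C + P k + A ^ 2 + 2 * A * Real.sqrt ((1 - t) * P k) := by
    have h1 := sq_nonneg A
    linarith
  have hnum : σ2 + C + P k + A ^ 2 + 2 * A * Real.sqrt ((1 - t) * P k)
      ≤ σ2 + C + P k + A ^ 2 + 2 * A * Real.sqrt ((1 - s) * P k) := by
    have := mul_le_mul_of_nonneg_left hr (by linarith : (0:ℝ) ≤ 2 * A)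
    linarith
  have hdivpos : 0 < (σ2 + C + P k + A ^ 2 + 2 * A * Real.sqrt ((1 - t) * P k)) / σ2 :=
    div_pos hpos hσ

  have := Real.log_le_log hdivpos (by exact div_le_div_of_nonneg_right hnum hσ.le)
  linarith
end

section
/- For each index k ∈ Fin N and fixed values of the other coordinates, the map ν_k ↦ D(ν) is non-decreasing on [0,1], where D(ν) = Q·(σ² + Σ_j ν_j·P_j)/(σ² + Σ_j ν_j·P_j + M(ν)²) and M(ν) = α·√Q + Σ_j √((1−ν_j)·P_j). -/
theorem stmt_10 (N : ℕ) (hN : 1 ≤ N) (Q σ2 α : ℝ) (hQ : 0 < Q) (hσ : 0 < σ2) (hα : 0 ≤ α)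
    (P : Fin N → ℝ) (hP : ∀ i, 0 < P i) :
    ∀ k : Fin N, ∀ ν : Fin N → ℝ, (∀ j, ν j ∈ Set.Icc (0:ℝ) 1) →
      MonotoneOn (fun t =>
        Q * (σ2 + ∑ j, Function.update ν k t j * P j)
          / (σ2 + (∑ j, Function.update ν k t j * P j)
            + (α * Real.sqrt Q
                + ∑ j, Real.sqrt ((1 - Function.update ν k t j) * P j)) ^ 2))
        (Set.Icc 0 1) := by
  intro k ν hν t1 ht1 t2 ht2 h12
  have hsum : ∀ (g : Fin N → ℝ → ℝ) (t : ℝ),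
      ∑ j, g j (Function.update ν k t j)
        = g k t + ∑ j ∈ Finset.univ.erase k, g j (ν j) := by
    intro g t
    rw [← Finset.add_sum_erase _ _ (Finset.mem_univ k)]
    congr 1
    · simp
    · exact Finset.sum_congr rfl fun j hj => by
        rw [Function.update_of_ne (Finset.ne_of_mem_erase hj)]
  simp only
  rw [hsum (fun j x => x * P j), hsum (fun j x => x * P j),
      hsum (fun j x => Real.sqrt ((1 - x) * P j)),
      hsum (fun j x => Real.sqrt ((1 - x) * P j))]
  set C := ∑ j ∈ Finset.univ.erase k, ν j * P j with hCdef
  set D := ∑ j ∈ Finset.univ.erase k, Real.sqrt ((1 - ν j) * P j) with hDdef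
  have hC : 0 ≤ C :=
    Finset.sum_nonneg fun j _ => mul_nonneg (hν j).1 (hP j).le
  have hD : 0 ≤ D := Finset.sum_nonneg fun j _ => Real.sqrt_nonneg _
  set S1 : ℝ := σ2 + (t1 * P k + C) with hS1
  set S2 : ℝ := σ2 + (t2 * P k + C) with hS2
  set M1 : ℝ := α * Real.sqrt Q + (Real.sqrt ((1 - t1) * P k) + D) with hM1
  set M2 : ℝ := α * Real.sqrt Q + (Real.sqrt ((1 - t2) * P k) + D) with hM2
  have hS1pos : 0 < S1 := by
    have := mul_nonneg ht1.1 (hP k).le; simp only [hS1]; linarith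
  have hS12 : S1 ≤ S2 := by
    have : t1 * P k ≤ t2 * P k := mul_le_mul_of_nonneg_right h12 (hP k).le
    simp only [hS1, hS2]; linarith
  have hM2nn : 0 ≤ M2 := by
    have h1 := Real.sqrt_nonneg Q
    have h2 := Real.sqrt_nonneg ((1 - t2) * P k)
    have := mul_nonneg hα h1
    simp only [hM2]; linarith
  have hM21 : M2 ≤ M1 := by
    have : Real.sqrt ((1 - t2) * P k) ≤ Real.sqrt ((1 - t1) * P k) := by
      apply Real.sqrt_le_sqrt
      exact mul_le_mul_of_nonneg_right (by linarith) (hP k).le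
    simp only [hM1, hM2]; linarith
  have hd1 : 0 < S1 + M1 ^ 2 := by positivity
  have hd2 : 0 < S2 + M2 ^ 2 := by
    have : 0 < S2 := lt_of_lt_of_le hS1pos hS12
    positivity
  rw [div_le_div_iff₀ hd1 hd2]
  have hMsq : M2 ^ 2 ≤ M1 ^ 2 := by nlinarith
  nlinarith [mul_le_mul hS12 hMsq (by positivity) (le_of_lt (lt_of_lt_of_le hS1pos hS12)),
    mul_pos hQ hS1pos]
end

section
/- Let (Ω, 𝔽, ℙ) be a probability space and let S, X₁, X₂, Z : Ω → ℝ be (mutually) independent random variables in L², each with mean zero, with variances E[S²] = Q, E[X₁²] = γ·P₁, E[X₂²] = β·P₂, E[Z²] = σ², where P₁, P₂, Q, σ² > 0 and γ, β ∈ [0,1]. Set c = 1 + √(γ̄·P₁/Q) + √(β̄·P₂/Q) and Y = X₁ + X₂ + c·S + Z. Then min over a ∈ ℝ of E[(S − a·Y)²] equals D(γ,β) = Q·(σ² + γ·P₁ + β·P₂)/L(γ,β), and the minimum is attained at a* = (Q + √(γ̄·P₁·Q) + √(β̄·P₂·Q))/L(γ,β), where L(γ,β) = P₁ + P₂ + Q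 + σ² + 2·√(γ̄·P₁·Q) + 2·√(β̄·P₂·Q) + 2·√(γ̄·β̄·P₁·P₂). (This is the achievable-distortion computation for the two-user dirty paper MAC.) -/
open MeasureTheory ProbabilityTheory

/-!
Independence and zero means kill every cross term, so
`E[(S - a Y)²] = (1 - a c)² Q + a² K` with `K = σ² + γ P₁ + β P₂`: a quadratic in `a` whose
minimum `Q K / (c² Q + K)` is attained at `a = c Q / (c² Q + K)` (complete the square).
Through `√(x Q) = √(x / Q) · Q` the square roots in `L(γ, β)` and in the numerator of `a*`
recombine into `L(γ, β) = c² Q + K = E[Y²]` and `c Q = E[S Y]`.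
-/

section
variable {Ω ι : Type*} [MeasurableSpace Ω] {μ : Measure Ω} [IsProbabilityMeasure μ]

lemma integral_sq_sum_const_mul_of_pairwise_indepFun {s : Finset ι} {X : ι → Ω → ℝ}
    (hX : ∀ i ∈ s, MemLp (X i) 2 μ) (hmean : ∀ i ∈ s, ∫ ω, X i ω ∂μ = 0)
    (hindep : Set.Pairwise s fun i j => IndepFun (X i) (X j) μ) (a : ι → ℝ) :
    ∫ ω, (∑ i ∈ s, a i * X i ω) ^ 2 ∂μ = ∑ i ∈ s, a i ^ 2 * ∫ ω, X i ω ^ 2 ∂μ := by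
  set Y : ι → Ω → ℝ := fun i ω => a i * X i ω
  have hY : ∀ i ∈ s, MemLp (Y i) 2 μ := fun i hi => (hX i hi).const_mul (a i)
  have hYmean : ∀ i ∈ s, ∫ ω, Y i ω ∂μ = 0 := fun i hi => by
    simp only [Y, integral_const_mul, hmean i hi, mul_zero]
  have hsum : (∑ i ∈ s, Y i) = fun ω => ∑ i ∈ s, a i * X i ω := by
    ext ω; simp [Y, Finset.sum_apply]
  calc ∫ ω, (∑ i ∈ s, a i * X i ω) ^ 2 ∂μ = Var[∑ i ∈ s, Y i; μ] := by
        rw [hsum, variance_of_integral_eq_zero]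
        · exact (memLp_finsetSum s hY).aemeasurable
        · rw [integral_finsetSum s fun i hi => (hY i hi).integrable one_le_two]
          exact Finset.sum_eq_zero hYmean
    _ = ∑ i ∈ s, Var[Y i; μ] := IndepFun.variance_sum hY fun i hi j hj hij =>
        (hindep hi hj hij).comp (measurable_const_mul (a i)) (measurable_const_mul (a j))
    _ = ∑ i ∈ s, a i ^ 2 * ∫ ω, X i ω ^ 2 ∂μ := Finset.sum_congr rfl fun i hi => by
        rw [variance_const_mul, variance_of_integral_eq_zero (hX i hi).aemeasurable (hmean i hi)]

lemma integral_sub_mul_sq_of_iIndepFun {S X₁ X₂ Z : Ω → ℝ} (hindep : iIndepFun ![S, X₁, X₂, Z] μ)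
    (hS : MemLp S 2 μ) (hX₁ : MemLp X₁ 2 μ) (hX₂ : MemLp X₂ 2 μ) (hZ : MemLp Z 2 μ)
    (hSmean : ∫ ω, S ω ∂μ = 0) (hX₁mean : ∫ ω, X₁ ω ∂μ = 0) (hX₂mean : ∫ ω, X₂ ω ∂μ = 0)
    (hZmean : ∫ ω, Z ω ∂μ = 0) (a c : ℝ) :
    ∫ ω, (S ω - a * (X₁ ω + X₂ ω + c * S ω + Z ω)) ^ 2 ∂μ
      = (1 - a * c) ^ 2 * ∫ ω, S ω ^ 2 ∂μ
        + a ^ 2 * (∫ ω, Z ω ^ 2 ∂μ + ∫ ω, X₁ ω ^ 2 ∂μ + ∫ ω, X₂ ω ^ 2 ∂μ) := by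
  have hsum : ∀ ω, S ω - a * (X₁ ω + X₂ ω + c * S ω + Z ω)
      = ∑ i, ![1 - a * c, -a, -a, -a] i * ![S, X₁, X₂, Z] i ω := fun ω => by
    simp only [Fin.sum_univ_four, Matrix.cons_val]
    ring
  simp_rw [hsum]
  rw [integral_sq_sum_const_mul_of_pairwise_indepFun (fun i _ => ?_) (fun i _ => ?_)
    (fun i _ j _ hij => hindep.indepFun hij)]
  · simp only [Fin.sum_univ_four, Matrix.cons_val]
    ring
  · fin_cases i <;> assumption
  · fin_cases i <;> assumption

end

lemma sqrt_mul_eq_sqrt_div_mul (x : ℝ) {Q : ℝ} (hQ : 0 < Q) : √(x * Q) = √(x / Q) * Q := by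
  rw [show x * Q = x / Q * Q ^ 2 by field_simp, Real.sqrt_mul' _ (sq_nonneg Q),
    Real.sqrt_sq hQ.le]

lemma one_sub_mul_sq_mul_add_sq_mul_eq {a c Q K : ℝ} (hL : c ^ 2 * Q + K ≠ 0) :
    (1 - a * c) ^ 2 * Q + a ^ 2 * K
      = Q * K / (c ^ 2 * Q + K) + (c ^ 2 * Q + K) * (a - c * Q / (c ^ 2 * Q + K)) ^ 2 := by
  field_simp
  ring

lemma Lfun_eq_sq_mul_add {P1 P2 Q σ2 γ β : ℝ} (hP1 : 0 ≤ P1) (hP2 : 0 ≤ P2) (hQ : 0 < Q) (hγ : γ ≤ 1)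
    (hβ : β ≤ 1) :
    Lfun P1 P2 Q σ2 γ β
      = (1 + √((1 - γ) * P1 / Q) + √((1 - β) * P2 / Q)) ^ 2 * Q + (σ2 + γ * P1 + β * P2) := by
  have hu : 0 ≤ (1 - γ) * P1 / Q := by have := sub_nonneg.2 hγ; positivity
  have hv : 0 ≤ (1 - β) * P2 / Q := by have := sub_nonneg.2 hβ; positivity
  have hprod :
      √((1 - γ) * (1 - β) * P1 * P2) = √((1 - γ) * P1 / Q) * √((1 - β) * P2 / Q) * Q := by
    rw [show (1 - γ) * (1 - β) * P1 * P2 = (1 - γ) * P1 / Q * ((1 - β) * P2 / Q) * Q ^ 2 by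
        field_simp,
      Real.sqrt_mul' _ (sq_nonneg Q), Real.sqrt_mul hu, Real.sqrt_sq hQ.le]
  rw [Lfun, sqrt_mul_eq_sqrt_div_mul _ hQ, sqrt_mul_eq_sqrt_div_mul _ hQ, hprod]
  have hu2 := Real.sq_sqrt hu
  have hv2 := Real.sq_sqrt hv
  field_simp at hu2 hv2
  linear_combination -hu2 - hv2

theorem stmt_11 {Ω : Type*} [MeasurableSpace Ω] (μ : Measure Ω) [IsProbabilityMeasure μ]
    (S X₁ X₂ Z : Ω → ℝ)
    (hindep : iIndepFun ![S, X₁, X₂, Z] μ)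
    (hSL2 : MemLp S 2 μ) (hX₁L2 : MemLp X₁ 2 μ) (hX₂L2 : MemLp X₂ 2 μ)
    (hZL2 : MemLp Z 2 μ)
    (hSmean : ∫ ω, S ω ∂μ = 0) (hX₁mean : ∫ ω, X₁ ω ∂μ = 0)
    (hX₂mean : ∫ ω, X₂ ω ∂μ = 0) (hZmean : ∫ ω, Z ω ∂μ = 0)
    (P1 P2 Q σ2 γ β : ℝ) (hP1 : 0 < P1) (hP2 : 0 < P2) (hQ : 0 < Q) (hσ : 0 < σ2)
    (hγ : γ ∈ Set.Icc (0:ℝ) 1) (hβ : β ∈ Set.Icc (0:ℝ) 1)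
    (hSvar : ∫ ω, (S ω) ^ 2 ∂μ = Q) (hX₁var : ∫ ω, (X₁ ω) ^ 2 ∂μ = γ * P1)
    (hX₂var : ∫ ω, (X₂ ω) ^ 2 ∂μ = β * P2) (hZvar : ∫ ω, (Z ω) ^ 2 ∂μ = σ2)
    (c : ℝ) (hc : c = 1 + Real.sqrt ((1 - γ) * P1 / Q) + Real.sqrt ((1 - β) * P2 / Q))
    (Y : Ω → ℝ) (hY : Y = fun ω => X₁ ω + X₂ ω + c * S ω + Z ω)
    (astar : ℝ)
    (hastar : astar = (Q + Real.sqrt ((1 - γ) * P1 * Q) + Real.sqrt ((1 - β) * P2 * Q))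
        / Lfun P1 P2 Q σ2 γ β) :
    IsLeast {e : ℝ | ∃ a : ℝ, e = ∫ ω, (S ω - a * Y ω) ^ 2 ∂μ} (Dfun P1 P2 Q σ2 γ β) ∧
      ∫ ω, (S ω - astar * Y ω) ^ 2 ∂μ = Dfun P1 P2 Q σ2 γ β := by
  obtain ⟨hγ0, hγ1⟩ := hγ
  obtain ⟨hβ0, hβ1⟩ := hβ
  have hL : Lfun P1 P2 Q σ2 γ β = c ^ 2 * Q + (σ2 + γ * P1 + β * P2) := by
    rw [Lfun_eq_sq_mul_add hP1.le hP2.le hQ hγ1 hβ1, hc]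
  have hL0 : 0 < c ^ 2 * Q + (σ2 + γ * P1 + β * P2) := by positivity
  have herror : ∀ a, ∫ ω, (S ω - a * Y ω) ^ 2 ∂μ = Dfun P1 P2 Q σ2 γ β
      + Lfun P1 P2 Q σ2 γ β * (a - c * Q / Lfun P1 P2 Q σ2 γ β) ^ 2 := fun a => by
    rw [hY, integral_sub_mul_sq_of_iIndepFun hindep hSL2 hX₁L2 hX₂L2 hZL2 hSmean hX₁mean hX₂mean
      hZmean, hSvar, hX₁var, hX₂var, hZvar,
      one_sub_mul_sq_mul_add_sq_mul_eq hL0.ne', Dfun, hL]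
  have hastar' : astar = c * Q / Lfun P1 P2 Q σ2 γ β := by
    rw [hastar, sqrt_mul_eq_sqrt_div_mul _ hQ, sqrt_mul_eq_sqrt_div_mul _ hQ, hc]
    ring
  have hopt : ∫ ω, (S ω - astar * Y ω) ^ 2 ∂μ = Dfun P1 P2 Q σ2 γ β := by
    simp [herror, hastar']
  refine ⟨⟨⟨astar, hopt.symm⟩, ?_⟩, hopt⟩
  rintro _ ⟨a, rfl⟩
  rw [herror]
  exact le_add_of_nonneg_right (mul_nonneg (hL ▸ hL0.le) (sq_nonneg _))
end

section
/- Let (Ω, 𝔽, ℙ) be a probability space, N ≥ 1, and let S, Z and X₁, …, X_N : Ω → ℝ be (mutually) independent random variables in L², each with mean zero, with E[S²] = Q, E[X_i²] = γ_i·P_i, E[Z²] = σ², where Q, σ² > 0, each P_i > 0, each γ_i ∈ [0,1], and let α ≥ 0. Set c = α + Σ_i √((1−γ_i)·P_i/Q) and Y = Σ_i X_i + c·S + Z. Then min over a ∈ ℝ of E[(S − a·Y)²] equals Q·(σ² + Σ_i γ_i·P_i)/(σ² + Σ_i γ_i·P_i + (α·√Q + Σ_i √((1−γ_i)·P_i))²).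 (This is the achievable-distortion computation for the N-sender Gaussian MAC, the right-hand side of equation (14) of the paper.) -/
/-!
Since `S - a * Y = (1 - a * c) * S - a * (∑ i, X i + Z)` is a linear combination of independent
centred variables, its second moment is `(1 - a * c) ^ 2 * Q + a ^ 2 * R` with
`R = σ² + ∑ i, γ i * P i`. This quadratic in `a` is minimal at `a = c * Q / (R + c ^ 2 * Q)`, with
value `Q * R / (R + c ^ 2 * Q)`, and `c ^ 2 * Q = (α * √Q + ∑ i, √((1 - γ i) * P i)) ^ 2`.
-/

open MeasureTheory ProbabilityTheory

theorem integral_sq_sum_const_mul_of_iIndepFun {Ω ι : Type*} [MeasurableSpace Ω] {μ : Measure Ω}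
    [IsProbabilityMeasure μ] [Fintype ι] {g : ι → Ω → ℝ} (hindep : iIndepFun g μ)
    (hL2 : ∀ k, MemLp (g k) 2 μ) (hmean : ∀ k, ∫ ω, g k ω ∂μ = 0) (d : ι → ℝ) :
    ∫ ω, (∑ k, d k * g k ω) ^ 2 ∂μ = ∑ k, d k ^ 2 * ∫ ω, g k ω ^ 2 ∂μ := by
  set W : ι → Ω → ℝ := fun k ω => d k * g k ω
  have hWL2 : ∀ k, MemLp (W k) 2 μ := fun k => (hL2 k).const_mul _
  have hsum : ∀ ω, ∑ k, d k * g k ω = (∑ k, W k) ω := fun ω => by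
    simp only [W, Finset.sum_apply]
  have hsum_mean : ∫ ω, (∑ k, W k) ω ∂μ = 0 := by
    simp only [Finset.sum_apply]
    rw [integral_finsetSum _ fun k _ => (hWL2 k).integrable one_le_two]
    simp [W, integral_const_mul, hmean]
  simp_rw [hsum]
  rw [← variance_of_integral_eq_zero (memLp_finsetSum' _ fun k _ => hWL2 k).aemeasurable
    hsum_mean, IndepFun.variance_sum (fun k _ => hWL2 k)
    fun i _ j _ hij => (hindep.indepFun hij).comp (measurable_const_mul _) (measurable_const_mul _)]
  refine Finset.sum_congr rfl fun k _ => ?_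
  rw [variance_const_mul, variance_of_integral_eq_zero (hL2 k).aemeasurable (hmean k)]

theorem integral_sq_sub_mul_sum_add_mul_add {Ω : Type*} [MeasurableSpace Ω] {μ : Measure Ω}
    [IsProbabilityMeasure μ] {N : ℕ} {S Z : Ω → ℝ} {X : Fin N → Ω → ℝ}
    (hindep : iIndepFun (Sum.elim X ![S, Z]) μ)
    (hSL2 : MemLp S 2 μ) (hZL2 : MemLp Z 2 μ) (hXL2 : ∀ i, MemLp (X i) 2 μ)
    (hSmean : ∫ ω, S ω ∂μ = 0) (hZmean : ∫ ω, Z ω ∂μ = 0) (hXmean : ∀ i, ∫ ω, X i ω ∂μ = 0)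
    (a c : ℝ) :
    ∫ ω, (S ω - a * ((∑ i, X i ω) + c * S ω + Z ω)) ^ 2 ∂μ
      = (1 - a * c) ^ 2 * ∫ ω, S ω ^ 2 ∂μ
        + a ^ 2 * ((∑ i, ∫ ω, X i ω ^ 2 ∂μ) + ∫ ω, Z ω ^ 2 ∂μ) := by
  set d : Fin N ⊕ Fin 2 → ℝ := Sum.elim (fun _ => -a) ![1 - a * c, -a]
  have hcomb : ∀ ω, S ω - a * ((∑ i, X i ω) + c * S ω + Z ω)
      = ∑ k, d k * Sum.elim X ![S, Z] k ω := fun ω => by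
    simp only [d, Fintype.sum_sum_type, Fin.sum_univ_two, Sum.elim_inl, Sum.elim_inr,
      Matrix.cons_val_zero, Matrix.cons_val_one, ← Finset.mul_sum]
    ring
  simp_rw [hcomb]
  rw [integral_sq_sum_const_mul_of_iIndepFun hindep
    (Sum.forall.2 ⟨hXL2, Fin.forall_fin_two.2 ⟨hSL2, hZL2⟩⟩)
    (Sum.forall.2 ⟨hXmean, Fin.forall_fin_two.2 ⟨hSmean, hZmean⟩⟩)]
  simp only [d, Fintype.sum_sum_type, Fin.sum_univ_two, Sum.elim_inl, Sum.elim_inr,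
    Matrix.cons_val_zero, Matrix.cons_val_one, ← Finset.mul_sum]
  ring

theorem isLeast_sq_one_sub_mul_mul_add_sq_mul {Q R c : ℝ} (hQ : 0 ≤ Q) (hR : 0 < R) :
    IsLeast {e : ℝ | ∃ a : ℝ, e = (1 - a * c) ^ 2 * Q + a ^ 2 * R}
      (Q * R / (R + c ^ 2 * Q)) := by
  have hV : 0 < R + c ^ 2 * Q := by positivity
  refine ⟨⟨c * Q / (R + c ^ 2 * Q), by field_simp; ring⟩, ?_⟩
  rintro e ⟨a, rfl⟩
  rw [div_le_iff₀ hV]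
  -- the excess over the minimum is `(a * (R + c ^ 2 * Q) - c * Q) ^ 2 / (R + c ^ 2 * Q)`
  nlinarith [sq_nonneg (a * (R + c ^ 2 * Q) - c * Q)]

theorem add_sum_sqrt_div_mul_sqrt {ι : Type*} (s : Finset ι) (α Q : ℝ) (x : ι → ℝ) (hQ : 0 < Q) :
    (α + ∑ i ∈ s, √(x i / Q)) * √Q = α * √Q + ∑ i ∈ s, √(x i) := by
  rw [add_mul, Finset.sum_mul]
  congr 1
  refine Finset.sum_congr rfl fun i _ => ?_
  rw [Real.sqrt_div' _ hQ.le, div_mul_cancel₀ _ (Real.sqrt_pos.2 hQ).ne']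

theorem stmt_12_general {Ω : Type*} [MeasurableSpace Ω] (μ : Measure Ω) [IsProbabilityMeasure μ]
    (N : ℕ) (S Z : Ω → ℝ) (X : Fin N → Ω → ℝ)
    (hindep : iIndepFun (Sum.elim X ![S, Z]) μ)
    (hSL2 : MemLp S 2 μ) (hZL2 : MemLp Z 2 μ) (hXL2 : ∀ i, MemLp (X i) 2 μ)
    (hSmean : ∫ ω, S ω ∂μ = 0) (hZmean : ∫ ω, Z ω ∂μ = 0)
    (hXmean : ∀ i, ∫ ω, X i ω ∂μ = 0)
    (Q σ2 α : ℝ) (P γ : Fin N → ℝ) (hQ : 0 < Q) (hσ : 0 < σ2)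
    (hSvar : ∫ ω, (S ω) ^ 2 ∂μ = Q) (hZvar : ∫ ω, (Z ω) ^ 2 ∂μ = σ2)
    (hXvar : ∀ i, ∫ ω, (X i ω) ^ 2 ∂μ = γ i * P i)
    (c : ℝ) (hc : c = α + ∑ i, Real.sqrt ((1 - γ i) * P i / Q))
    (Y : Ω → ℝ) (hY : Y = fun ω => (∑ i, X i ω) + c * S ω + Z ω) :
    IsLeast {e : ℝ | ∃ a : ℝ, e = ∫ ω, (S ω - a * Y ω) ^ 2 ∂μ}
      (Q * (σ2 + ∑ i, γ i * P i)
        / (σ2 + (∑ i, γ i * P i)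
            + (α * Real.sqrt Q + ∑ i, Real.sqrt ((1 - γ i) * P i)) ^ 2)) := by
  have hXvar_nonneg : 0 ≤ ∑ i, γ i * P i :=
    Finset.sum_nonneg fun i _ => hXvar i ▸ integral_nonneg fun ω => sq_nonneg _
  have hden : (α * √Q + ∑ i, √((1 - γ i) * P i)) ^ 2 = c ^ 2 * Q := by
    rw [← add_sum_sqrt_div_mul_sqrt _ _ _ _ hQ, ← hc, mul_pow, Real.sq_sqrt hQ.le]
  simp_rw [hY, integral_sq_sub_mul_sum_add_mul_add hindep hSL2 hZL2 hXL2 hSmean hZmean hXmean,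
    hSvar, hZvar, hXvar, hden, add_comm σ2]
  exact isLeast_sq_one_sub_mul_mul_add_sq_mul hQ.le (by positivity)

theorem stmt_12 {Ω : Type*} [MeasurableSpace Ω] (μ : Measure Ω) [IsProbabilityMeasure μ]
    (N : ℕ) (hN : 1 ≤ N) (S Z : Ω → ℝ) (X : Fin N → Ω → ℝ)
    (hindep : iIndepFun (Sum.elim X ![S, Z]) μ)
    (hSL2 : MemLp S 2 μ) (hZL2 : MemLp Z 2 μ) (hXL2 : ∀ i, MemLp (X i) 2 μ)
    (hSmean : ∫ ω, S ω ∂μ = 0) (hZmean : ∫ ω, Z ω ∂μ = 0)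
    (hXmean : ∀ i, ∫ ω, X i ω ∂μ = 0)
    (Q σ2 α : ℝ) (P γ : Fin N → ℝ) (hQ : 0 < Q) (hσ : 0 < σ2) (hα : 0 ≤ α)
    (hP : ∀ i, 0 < P i) (hγ : ∀ i, γ i ∈ Set.Icc (0:ℝ) 1)
    (hSvar : ∫ ω, (S ω) ^ 2 ∂μ = Q) (hZvar : ∫ ω, (Z ω) ^ 2 ∂μ = σ2)
    (hXvar : ∀ i, ∫ ω, (X i ω) ^ 2 ∂μ = γ i * P i)
    (c : ℝ) (hc : c = α + ∑ i, Real.sqrt ((1 - γ i) * P i / Q))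
    (Y : Ω → ℝ) (hY : Y = fun ω => (∑ i, X i ω) + c * S ω + Z ω) :
    IsLeast {e : ℝ | ∃ a : ℝ, e = ∫ ω, (S ω - a * Y ω) ^ 2 ∂μ}
      (Q * (σ2 + ∑ i, γ i * P i)
        / (σ2 + (∑ i, γ i * P i)
            + (α * Real.sqrt Q + ∑ i, Real.sqrt ((1 - γ i) * P i)) ^ 2)) :=
  stmt_12_general μ N S Z X hindep hSL2 hZL2 hXL2 hSmean hZmean hXmean Q σ2 α P γ hQ hσ hSvar hZvar
    hXvar c hc Y hY
end

section
/- (Minimal distortion equals uncoded super-user transmission.) For P₁, P₂, Q, σ² > 0, the value of the distortion function at γ = β = 0 satisfies D(0,0) = Q·σ²/(σ² + (√P₁ + √P₂ + √Q)²); moreover D(0,0) ≤ D(γ,β) for every γ, β ∈ [0,1]. -/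
theorem stmt_16 (P1 P2 Q σ2 : ℝ) (hP1 : 0 < P1) (hP2 : 0 < P2) (hQ : 0 < Q) (hσ : 0 < σ2) :
    Dfun P1 P2 Q σ2 0 0
        = Q * σ2 / (σ2 + (Real.sqrt P1 + Real.sqrt P2 + Real.sqrt Q) ^ 2) ∧
      ∀ γ ∈ Set.Icc (0:ℝ) 1, ∀ β ∈ Set.Icc (0:ℝ) 1,
        Dfun P1 P2 Q σ2 0 0 ≤ Dfun P1 P2 Q σ2 γ β := by
  have hL0 : Lfun P1 P2 Q σ2 0 0
      = σ2 + (Real.sqrt P1 + Real.sqrt P2 + Real.sqrt Q) ^ 2 := by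
    unfold Lfun
    have h1 : Real.sqrt ((1 - (0:ℝ)) * P1 * Q) = Real.sqrt P1 * Real.sqrt Q := by
      rw [show (1 - (0:ℝ)) * P1 * Q = P1 * Q by ring, Real.sqrt_mul hP1.le]
    have h2 : Real.sqrt ((1 - (0:ℝ)) * P2 * Q) = Real.sqrt P2 * Real.sqrt Q := by
      rw [show (1 - (0:ℝ)) * P2 * Q = P2 * Q by ring, Real.sqrt_mul hP2.le]
    have h3 : Real.sqrt ((1 - (0:ℝ)) * (1 - (0:ℝ)) * P1 * P2)
        = Real.sqrt P1 * Real.sqrt P2 := by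
      rw [show (1 - (0:ℝ)) * (1 - (0:ℝ)) * P1 * P2 = P1 * P2 by ring,
        Real.sqrt_mul hP1.le]
    rw [h1, h2, h3]
    nlinarith [Real.sq_sqrt hP1.le, Real.sq_sqrt hP2.le, Real.sq_sqrt hQ.le]
  have hL0pos : 0 < Lfun P1 P2 Q σ2 0 0 := by
    rw [hL0]; positivity
  constructor
  · unfold Dfun
    rw [hL0]
    norm_num
  · intro γ hγ β hβ
    obtain ⟨hγ0, hγ1⟩ := hγ
    obtain ⟨hβ0, hβ1⟩ := hβ
    have hLpos : 0 < Lfun P1 P2 Q σ2 γ β := by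
      unfold Lfun
      have s1 : 0 ≤ Real.sqrt ((1 - γ) * P1 * Q) := Real.sqrt_nonneg _
      have s2 : 0 ≤ Real.sqrt ((1 - β) * P2 * Q) := Real.sqrt_nonneg _
      have s3 : 0 ≤ Real.sqrt ((1 - γ) * (1 - β) * P1 * P2) := Real.sqrt_nonneg _
      linarith
    have hLle : Lfun P1 P2 Q σ2 γ β ≤ Lfun P1 P2 Q σ2 0 0 := by
      unfold Lfun
      have t1 : Real.sqrt ((1 - γ) * P1 * Q) ≤ Real.sqrt ((1 - (0:ℝ)) * P1 * Q) := by
        apply Real.sqrt_le_sqrt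
        nlinarith [mul_nonneg (mul_nonneg hγ0 hP1.le) hQ.le]
      have t2 : Real.sqrt ((1 - β) * P2 * Q) ≤ Real.sqrt ((1 - (0:ℝ)) * P2 * Q) := by
        apply Real.sqrt_le_sqrt
        nlinarith [mul_nonneg (mul_nonneg hβ0 hP2.le) hQ.le]
      have t3 : Real.sqrt ((1 - γ) * (1 - β) * P1 * P2)
          ≤ Real.sqrt ((1 - (0:ℝ)) * (1 - (0:ℝ)) * P1 * P2) := by
        apply Real.sqrt_le_sqrt
        have h1γ : (1 - γ) ≤ 1 := by linarith
        have h1β : (1 - β) ≤ 1 := by linarith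
        have h1γ0 : 0 ≤ 1 - γ := by linarith
        have h1β0 : 0 ≤ 1 - β := by linarith
        have := mul_le_one₀ h1γ h1β0 h1β
        nlinarith [mul_pos hP1 hP2]
      linarith
    unfold Dfun
    rw [div_le_div_iff₀ hL0pos hLpos]
    have hnum : Q * (σ2 + 0 * P1 + 0 * P2) = Q * σ2 := by ring
    rw [hnum]
    have h1 : Q * σ2 * Lfun P1 P2 Q σ2 γ β ≤ Q * σ2 * Lfun P1 P2 Q σ2 0 0 := by
      apply mul_le_mul_of_nonneg_left hLle; positivity
    have h2 : Q * σ2 * Lfun P1 P2 Q σ2 0 0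
        ≤ Q * (σ2 + γ * P1 + β * P2) * Lfun P1 P2 Q σ2 0 0 := by
      apply mul_le_mul_of_nonneg_right _ hL0pos.le
      nlinarith [mul_nonneg hγ0 hP1.le, mul_nonneg hβ0 hP2.le, hQ.le]
    linarith
end
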